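/- Let K₁ = {c₁ + B₁ β | ‖β‖_∞ ≤ 1} and K₂ = {c₂ + B₂ β | ‖β‖_∞ ≤ 1} be zonotopes in ℝ^d with centers c₁, c₂ ∈ ℝ^d and generator matrices B₁ ∈ ℝ^{d×m}, B₂ ∈ ℝ^{d×p}. Suppose there exist Γ ∈ ℝ^{p×m} and ω ∈ ℝ^p such that B₁ = B₂ Γ, c₂ - c₁ = B₂ ω, and for every row i, ∑_j |Γ_{ij}| + |ω_i| ≤ 1. Then K₁ ⊆ K₂. -/
import Mathlib


/-- Sufficient condition for zonotope-in-zonotope containment. -/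
theorem zonotope_containment {d m p : ℕ}
    (c₁ c₂ : Fin d → ℝ)
    (B₁ : Matrix (Fin d) (Fin m) ℝ) (B₂ : Matrix (Fin d) (Fin p) ℝ)
    (Γ : Matrix (Fin p) (Fin m) ℝ) (ω : Fin p → ℝ)
    (hB : B₁ = B₂ * Γ)
    (hc : c₂ - c₁ = B₂.mulVec ω)
    (hrow : ∀ i : Fin p, (∑ j, |Γ i j|) + |ω i| ≤ 1) :
    {x : Fin d → ℝ | ∃ β : Fin m → ℝ, (∀ j, |β j| ≤ 1) ∧ x = c₁ + B₁.mulVec β} ⊆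
      {x : Fin d → ℝ | ∃ β : Fin p → ℝ, (∀ j, |β j| ≤ 1) ∧ x = c₂ + B₂.mulVec β} := by
  rintro x ⟨β, hβ, rfl⟩
  refine ⟨Γ.mulVec β - ω, fun i => ?_, ?_⟩
  · calc |(Γ.mulVec β - ω) i| = |∑ j, Γ i j * β j - ω i| := rfl
      _ ≤ |∑ j, Γ i j * β j| + |ω i| := abs_sub _ _
      _ ≤ (∑ j, |Γ i j * β j|) + |ω i| := by
          gcongr; exact Finset.abs_sum_le_sum_abs _ _
      _ ≤ (∑ j, |Γ i j|) + |ω i| := by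
          gcongr ?_ + _
          refine Finset.sum_le_sum fun j _ => ?_
          rw [abs_mul]
          exact mul_le_of_le_one_right (abs_nonneg _) (hβ j)
      _ ≤ 1 := hrow i
  · rw [Matrix.mulVec_sub, hB, ← Matrix.mulVec_mulVec, ← hc]
    abel
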